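/- Computing the transient variable map over L-equivalent buffers and L-equivalent maps yields L-equivalent maps: if Γ ⊢ is₁ ≈_L is₂ and Γ ⊢ ρ₁ ≈_L ρ₂, then Γ ⊢ φ(is₁, ρ₁) ≈_L φ(is₂, ρ₂). -/
import Mathlib


/-- Transient-flow types: stable `S` or transient `T`. -/
inductive TFlow where
  | S : TFlow
  | T : TFlow
deriving DecidableEq

/-- Processor instructions, over variables `Var`, values `V`, expressions `E`,
and commands `C`: nop, `fail(p)`, resolved assignments `x := v`, unresolved
assignments `x := e`, loads, protects, stores (labelled by the secrecy of the
written location: `true` = secret `H`, `false` = public `L`), and guards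
`guard(e^b, cs, p)`. -/
inductive Instr (Var V E C : Type) where
  | nop : Instr Var V E C
  | fail : ℕ → Instr Var V E C
  | asgnV : Var → V → Instr Var V E C
  | asgnE : Var → E → Instr Var V E C
  | load : Var → E → Instr Var V E C
  | protect : Var → E → Instr Var V E C
  | store : Bool → E → E → Instr Var V E C
  | guard : E → Bool → List C → ℕ → Instr Var V E C

/-- `i` is an assignment (resolved or not) to the variable `x`. -/
def isAsgnTo {Var V E C : Type} (x : Var) : Instr Var V E C → Prop
  | .asgnV y _ => y = x
  | .asgnE y _ => y = x
  | _ => False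

/-- L-equivalence of instructions (with respect to a transient-flow typing `Γ`
and a set `L` of public variables): instructions are related only if of the
same kind; guard, fail, load and public-store instructions must be identical,
secret stores share the address expression, protects share the target
variable, assignments to a public stable variable are identical, and
assignments to a secret or transient variable merely share the target. -/
inductive IEq {Var V E C : Type} (Γ : Var → TFlow) (L : Set Var) :
    Instr Var V E C → Instr Var V E C → Prop where
  | nop : IEq Γ L .nop .nop
  | fail (p : ℕ) : IEq Γ L (.fail p) (.fail p)
  | guard (e : E) (b : Bool) (cs : List C) (p : ℕ) :
      IEq Γ L (.guard e b cs p) (.guard e b cs p)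
  | load (x : Var) (e : E) : IEq Γ L (.load x e) (.load x e)
  | protect (x : Var) (e₁ e₂ : E) : IEq Γ L (.protect x e₁) (.protect x e₂)
  | storeH (e e₁ e₂ : E) : IEq Γ L (.store true e e₁) (.store true e e₂)
  | storeL (e₁ e₂ : E) : IEq Γ L (.store false e₁ e₂) (.store false e₁ e₂)
  | asgnLS (i : Instr Var V E C) (x : Var) (hx : x ∈ L) (hΓ : Γ x = .S)
      (h : isAsgnTo x i) : IEq Γ L i i
  | asgnHT (i₁ i₂ : Instr Var V E C) (x : Var) (hx : x ∉ L ∨ Γ x = .T)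
      (h₁ : isAsgnTo x i₁) (h₂ : isAsgnTo x i₂) : IEq Γ L i₁ i₂

/-- The transient variable map `φ(ρ, is)`: resolved assignments update the map,
unresolved assignments, loads and protects mark their target variable
undefined, and other instructions leave the map unchanged. -/
def phi {Var V E C : Type} [DecidableEq Var] :
    (Var → Option V) → List (Instr Var V E C) → (Var → Option V)
  | ρ, [] => ρ
  | ρ, .asgnV x v :: is => phi (Function.update ρ x (some v)) is
  | ρ, .asgnE x _ :: is => phi (Function.update ρ x none) is
  | ρ, .load x _ :: is => phi (Function.update ρ x none) is
  | ρ, .protect x _ :: is => phi (Function.update ρ x none) is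
  | ρ, _ :: is => phi ρ is

/-- L-equivalence of transient variable maps: agreement on every variable that
is both public and typed stable. -/
def MEq {Var V : Type} (Γ : Var → TFlow) (L : Set Var)
    (ρ₁ ρ₂ : Var → Option V) : Prop :=
  ∀ x ∈ L, Γ x = .S → ρ₁ x = ρ₂ x

lemma phi_asgn_key {Var V E C : Type} [DecidableEq Var]
    {x : Var} {i : Instr Var V E C} (h : isAsgnTo x i) :
    ∃ v : Option V, ∀ (ρ : Var → Option V) (is : List (Instr Var V E C)),
      phi ρ (i :: is) = phi (Function.update ρ x v) is := by
  cases i with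
  | asgnV y v => cases h; exact ⟨some v, fun _ _ => rfl⟩
  | asgnE y e => cases h; exact ⟨none, fun _ _ => rfl⟩
  | nop => cases h
  | fail _ => cases h
  | load _ _ => cases h
  | protect _ _ => cases h
  | store _ _ _ => cases h
  | guard _ _ _ _ => cases h

/-- Computing the transient variable map over L-equivalent buffers and
L-equivalent maps yields L-equivalent maps:
`Γ ⊢ is₁ ≈_L is₂` and `Γ ⊢ ρ₁ ≈_L ρ₂` imply `Γ ⊢ φ(is₁,ρ₁) ≈_L φ(is₂,ρ₂)`. -/
theorem phi_equiv {Var V E C : Type} [DecidableEq Var]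
    (Γ : Var → TFlow) (L : Set Var)
    (is₁ is₂ : List (Instr Var V E C)) (ρ₁ ρ₂ : Var → Option V)
    (hbuf : List.Forall₂ (IEq Γ L) is₁ is₂)
    (hmap : MEq Γ L ρ₁ ρ₂) :
    MEq Γ L (phi ρ₁ is₁) (phi ρ₂ is₂) := by
  induction hbuf generalizing ρ₁ ρ₂ with
  | nil => exact hmap
  | cons hI _ ih =>
    have upd_same : ∀ (x : Var) (v : Option V),
        MEq Γ L (Function.update ρ₁ x v) (Function.update ρ₂ x v) := by
      intro x v y hy hΓy
      by_cases h : y = x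
      · subst h; simp
      · simp [Function.update_of_ne h]; exact hmap y hy hΓy
    have upd_priv : ∀ (x : Var), (x ∉ L ∨ Γ x = .T) → ∀ (v₁ v₂ : Option V),
        MEq Γ L (Function.update ρ₁ x v₁) (Function.update ρ₂ x v₂) := by
      intro x hx v₁ v₂ y hy hΓy
      by_cases h : y = x
      · subst h
        rcases hx with hx | hx
        · exact absurd hy hx
        · rw [hΓy] at hx; cases hx
      · simp [Function.update_of_ne h]; exact hmap y hy hΓy
    cases hI with
    | nop => exact ih _ _ hmap
    | fail p => exact ih _ _ hmap
    | guard e b cs p => exact ih _ _ hmap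
    | load x e => exact ih _ _ (upd_same x none)
    | protect x e₁ e₂ => exact ih _ _ (upd_same x none)
    | storeH e e₁ e₂ => exact ih _ _ hmap
    | storeL e₁ e₂ => exact ih _ _ hmap
    | asgnLS i x hx hΓ h =>
      obtain ⟨v, hv⟩ := phi_asgn_key h
      rw [hv ρ₁, hv ρ₂]
      exact ih _ _ (upd_same x v)
    | asgnHT i₁ i₂ x hx h₁ h₂ =>
      obtain ⟨v₁, hv₁⟩ := phi_asgn_key h₁
      obtain ⟨v₂, hv₂⟩ := phi_asgn_key h₂
      rw [hv₁ ρ₁, hv₂ ρ₂]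
      exact ih _ _ (upd_priv x hx v₁ v₂)
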